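/- Let m, n ≥ 1 be integers, let P_m be the path of length m (with m+1 vertices) and K_n the complete graph on n vertices. Then the sparing number of the corona P_m ⊙ K_n equals (1/2)n(n−1)(m+1). -/

import Mathlib

/-!
By Cauchy–Davenport, `|A + B| = max |A| |B|` forces `|A| = 1` or `|B| = 1`, so in a weak IASI
the vertices with labels of size at least two form an independent set, and an edge is
mono-indexed exactly when both its endpoints are. In `G₁ ⊙ K_n` every vertex `i` of `G₁`
together with its copy of `K_n` is a clique `K_{n+1}`; it contains at most one vertex that is not
mono-indexed, hence at least `n(n-1)/2` mono-indexed edges, and these cliques are disjoint.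
Conversely, for a properly 2-coloured `G₁` (such as a path) choose one vertex per clique so that
every edge of `G₁` has a chosen endpoint; giving exactly the chosen vertices two-element labels
(intervals `[2^k, 2^k + 1]` beside singletons `{2^k}`) yields a weak IASI whose mono-indexed edges
are the `n(n-1)/2` edges left inside each clique.
-/

open Pointwise

/-- The induced set-label on (potential) edges: `f u + f v` (sumset). -/
def edgeLabel {V : Type*} (f : V → Finset ℕ) : Sym2 V → Finset ℕ :=
  Sym2.lift ⟨fun u v => f u + f v, fun u v => add_comm (f u) (f v)⟩

/-- `f` is a weak integer additive set-indexer (weak IASI) of `G`. -/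
structure IsWeakIASI {V : Type*} (G : SimpleGraph V) (f : V → Finset ℕ) : Prop where
  inj : Function.Injective f
  nonempty : ∀ v, (f v).Nonempty
  edgeInj : Set.InjOn (edgeLabel f) G.edgeSet
  weak : ∀ ⦃u v⦄, G.Adj u v → (f u + f v).card = max (f u).card (f v).card

/-- The number of mono-indexed edges of `G` under the labeling `f`. -/
noncomputable def monoCount {V : Type*} (G : SimpleGraph V) (f : V → Finset ℕ) : ℕ :=
  {e | e ∈ G.edgeSet ∧ (edgeLabel f e).card = 1}.ncard

/-- The sparing number of `G`: the minimum number of mono-indexed edges over all weak IASIs. -/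
noncomputable def sparingNumber {V : Type*} (G : SimpleGraph V) : ℕ :=
  sInf {k | ∃ f, IsWeakIASI G f ∧ monoCount G f = k}

/-- The corona `G₁ ⊙ G₂`: one copy of `G₁`, a copy of `G₂` for each vertex `i` of `G₁`,
with `i` joined to every vertex of the `i`-th copy of `G₂`. -/
def corona {V₁ V₂ : Type*} (G₁ : SimpleGraph V₁) (G₂ : SimpleGraph V₂) :
    SimpleGraph (V₁ ⊕ V₁ × V₂) where
  Adj x y :=
    match x, y with
    | Sum.inl u, Sum.inl v => G₁.Adj u v
    | Sum.inl u, Sum.inr q => u = q.1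
    | Sum.inr p, Sum.inl v => v = p.1
    | Sum.inr p, Sum.inr q => p.1 = q.1 ∧ G₂.Adj p.2 q.2
  symm := by
    constructor
    rintro (u | ⟨i, a⟩) (v | ⟨j, b⟩) h
    · exact h.symm
    · exact h
    · exact h
    · exact ⟨h.1.symm, h.2.symm⟩
  loopless := by
    constructor
    rintro (u | ⟨i, a⟩) h
    · exact G₁.irrefl h
    · exact G₂.irrefl h.2

open Finset Function

lemma Finset.card_add_eq_one_iff {A B : Finset ℕ} (hA : A.Nonempty) (hB : B.Nonempty) :
    #(A + B) = 1 ↔ #A = 1 ∧ #B = 1 := by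
  have := cauchy_davenport_add_of_linearOrder_isCancelAdd hA hB
  constructor
  · intro h
    have := hA.card_pos
    have := hB.card_pos
    omega
  · rintro ⟨hA1, hB1⟩
    obtain ⟨a, rfl⟩ := card_eq_one.mp hA1
    rw [card_singleton_add, hB1]

lemma Nat.Icc_add_Icc {a b c d : ℕ} (hab : a ≤ b) (hcd : c ≤ d) :
    Icc a b + Icc c d = Icc (a + c) (b + d) := by
  refine (Icc_add_Icc_subset a b c d).antisymm fun x hx => ?_
  rw [mem_Icc] at hx
  exact mem_add.mpr ⟨min (x - c) b, by simp; omega, x - min (x - c) b, by simp; omega, by omega⟩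

lemma Finset.left_eq_of_Icc_eq_Icc {α : Type*} [PartialOrder α] [LocallyFiniteOrder α]
    {a b c d : α} (hab : a ≤ b) (hcd : c ≤ d) (h : Icc a b = Icc c d) : a = c :=
  le_antisymm (mem_Icc.mp (h.symm ▸ left_mem_Icc.mpr hcd)).1
    (mem_Icc.mp (h ▸ left_mem_Icc.mpr hab)).1

lemma Nat.sym2_eq_of_two_pow_add_two_pow_eq {a b c d : ℕ} (hab : a ≠ b) (hcd : c ≠ d)
    (h : 2 ^ a + 2 ^ b = 2 ^ c + 2 ^ d) : s(a, b) = s(c, d) := by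
  have hpair : ({a, b} : Finset ℕ) = {c, d} :=
    geomSum_injective le_rfl (by simpa [sum_pair hab, sum_pair hcd] using h)
  ext x
  simpa using congrArg (x ∈ ·) hpair

lemma Finset.mul_pred_le_card_offDiag {α : Type*} [DecidableEq α] {s : Finset α} {n : ℕ}
    (h : n ≤ #s) : n * (n - 1) ≤ #s.offDiag := by
  rw [offDiag_card, ← Nat.mul_sub_one]
  exact Nat.mul_le_mul h (Nat.sub_le_sub_right h 1)

lemma Finset.card_offDiag_le_mul_pred {α : Type*} [DecidableEq α] {s : Finset α} {n : ℕ}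
    (h : #s ≤ n) : #s.offDiag ≤ n * (n - 1) := by
  rw [offDiag_card, ← Nat.mul_sub_one]
  exact Nat.mul_le_mul h (Nat.sub_le_sub_right h 1)

variable {V : Type*} {G : SimpleGraph V} {f : V → Finset ℕ}

namespace IsWeakIASI

lemma card_eq_one_or (hf : IsWeakIASI G f) {u v : V} (h : G.Adj u v) :
    #(f u) = 1 ∨ #(f v) = 1 := by
  have := cauchy_davenport_add_of_linearOrder_isCancelAdd (hf.nonempty u) (hf.nonempty v)
  have := hf.weak h
  have := (hf.nonempty u).card_pos
  have := (hf.nonempty v).card_pos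
  omega

lemma card_le_card_filter_add_one (hf : IsWeakIASI G f) {s : Finset V} (hs : G.IsClique s) :
    #s ≤ #{v ∈ s | #(f v) = 1} + 1 := by
  have : #{v ∈ s | ¬#(f v) = 1} ≤ 1 := by
    refine card_le_one.mpr fun u hu v hv => ?_
    rw [mem_filter] at hu hv
    by_contra huv
    exact (hf.card_eq_one_or (hs hu.1 hv.1 huv)).elim hu.2 hv.2
  have := card_filter_add_card_filter_not (s := s) (fun v => #(f v) = 1)
  omega

lemma sparingNumber_le (hf : IsWeakIASI G f) : sparingNumber G ≤ monoCount G f :=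
  Nat.sInf_le ⟨f, hf, rfl⟩

end IsWeakIASI

lemma exists_isWeakIASI_monoCount_eq_sparingNumber (h : ∃ f, IsWeakIASI G f) :
    ∃ f, IsWeakIASI G f ∧ monoCount G f = sparingNumber G :=
  let ⟨f, hf⟩ := h
  Nat.sInf_mem (s := {k | ∃ f, IsWeakIASI G f ∧ monoCount G f = k}) ⟨_, f, hf, rfl⟩

lemma exists_isWeakIASI_card_eq_one_iff [Countable V] (N : Set V)
    (hN : ∀ ⦃u v⦄, G.Adj u v → u ∉ N ∨ v ∉ N) :
    ∃ f, IsWeakIASI G f ∧ ∀ v, #(f v) = 1 ↔ v ∉ N := by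
  classical
  obtain ⟨e, he⟩ := exists_injective_nat V
  set δ : V → ℕ := fun v => if v ∈ N then 1 else 0
  have hδ : ∀ ⦃u v⦄, G.Adj u v → δ u = 0 ∨ δ v = 0 := fun u v h => by
    rcases hN h with h | h <;> simp [δ, h]
  have hcard (v) : #(Icc (2 ^ e v) (2 ^ e v + δ v)) = δ v + 1 := by simp; omega
  have hpow {a b : ℕ} (h : 2 ^ a = 2 ^ b) : a = b := Nat.pow_right_injective le_rfl h
  refine ⟨fun v => Icc (2 ^ e v) (2 ^ e v + δ v), ⟨?inj, ?nonempty, ?edgeInj, ?weak⟩, ?mono⟩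
  case inj => exact fun u v h => he (hpow (left_eq_of_Icc_eq_Icc (by omega) (by omega) h))
  case nonempty => exact fun v => nonempty_Icc.mpr (by omega)
  case edgeInj =>
    -- The left endpoint `2 ^ e u + 2 ^ e v` of an edge label determines the edge.
    intro e₁ he₁ e₂ he₂ h
    induction e₁ using Sym2.ind with | _ u v => ?_
    induction e₂ using Sym2.ind with | _ u' v' => ?_
    simp only [edgeLabel, Sym2.lift_mk, Nat.Icc_add_Icc (Nat.le_add_right _ _)
      (Nat.le_add_right _ _)] at h
    have hsum := left_eq_of_Icc_eq_Icc (by omega) (by omega) h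
    have hs := Nat.sym2_eq_of_two_pow_add_two_pow_eq (he.ne he₁.ne) (he.ne he₂.ne) hsum
    rw [← Sym2.map_mk, ← Sym2.map_mk] at hs
    exact Sym2.map.injective he hs
  case weak =>
    intro u v h
    rw [Nat.Icc_add_Icc (Nat.le_add_right _ _) (Nat.le_add_right _ _), Nat.card_Icc, hcard, hcard]
    rcases hδ h with h0 | h0 <;> omega
  case mono => exact fun v => by rw [hcard]; by_cases hv : v ∈ N <;> simp [δ, hv]

lemma two_mul_monoCount [Fintype V] [DecidableRel G.Adj] (hf : ∀ v, (f v).Nonempty) :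
    2 * monoCount G f = #{p : V × V | G.Adj p.1 p.2 ∧ #(f p.1) = 1 ∧ #(f p.2) = 1} := by
  classical
  let H := G.deleteEdges {e | #(edgeLabel f e) ≠ 1}
  have hH : monoCount G f = #H.edgeFinset := by
    rw [monoCount, ← Set.ncard_coe_finset, SimpleGraph.coe_edgeFinset,
      SimpleGraph.edgeSet_deleteEdges]
    congr 1
    ext e
    simp
  rw [hH, SimpleGraph.two_mul_card_edgeFinset]
  congr 1
  ext ⟨u, v⟩
  simp [H, edgeLabel, Finset.card_add_eq_one_iff (hf u) (hf v)]

section Blocks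

variable [Fintype V] [DecidableEq V] [DecidableRel G.Adj] {ι : Type*} [Fintype ι]
  {s : ι → Finset V} {P : V → Prop} [DecidablePred P]

lemma sum_card_offDiag_le_card_adj (hs : Pairwise (Disjoint on s))
    (hcl : ∀ i, G.IsClique (s i)) :
    ∑ i, #{v ∈ s i | P v}.offDiag ≤ #{p : V × V | G.Adj p.1 p.2 ∧ P p.1 ∧ P p.2} := by
  rw [← card_biUnion]
  · refine card_le_card fun p hp => ?_
    simp only [mem_biUnion, mem_univ, true_and, mem_offDiag, mem_filter] at hp ⊢
    obtain ⟨i, ⟨h₁, hP₁⟩, ⟨h₂, hP₂⟩, hne⟩ := hp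
    exact ⟨hcl i h₁ h₂ hne, hP₁, hP₂⟩
  · intro i _ j _ hij
    refine disjoint_left.mpr fun p hi hj => ?_
    simp only [mem_offDiag, mem_filter] at hi hj
    exact disjoint_left.mp (hs hij) hi.1.1 hj.1.1

lemma card_adj_le_sum_card_offDiag
    (hcover : ∀ ⦃u v⦄, G.Adj u v → P u → P v → ∃ i, u ∈ s i ∧ v ∈ s i) :
    #{p : V × V | G.Adj p.1 p.2 ∧ P p.1 ∧ P p.2} ≤ ∑ i, #{v ∈ s i | P v}.offDiag := by
  refine (card_le_card fun p hp => ?_).trans card_biUnion_le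
  simp only [mem_filter, mem_univ, true_and] at hp
  obtain ⟨hadj, hP₁, hP₂⟩ := hp
  obtain ⟨i, h₁, h₂⟩ := hcover hadj hP₁ hP₂
  simp only [mem_biUnion, mem_univ, true_and, mem_offDiag, mem_filter]
  exact ⟨i, ⟨h₁, hP₁⟩, ⟨h₂, hP₂⟩, hadj.ne⟩

end Blocks

section Corona

variable {V₁ V₂ : Type*}

def coronaBase : V₁ ⊕ V₁ × V₂ → V₁ := Sum.elim id Prod.fst

lemma exists_adj_of_corona_adj {G₁ : SimpleGraph V₁} {G₂ : SimpleGraph V₂}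
    {u v : V₁ ⊕ V₁ × V₂} (h : (corona G₁ G₂).Adj u v) (huv : coronaBase u ≠ coronaBase v) :
    ∃ a b, u = .inl a ∧ v = .inl b ∧ G₁.Adj a b := by
  rcases u with a | ⟨a, x⟩ <;> rcases v with b | ⟨b, y⟩
  · exact ⟨a, b, rfl, rfl, h⟩
  · exact absurd h huv
  · exact absurd (Eq.symm h) huv
  · exact absurd h.1 huv

variable [Fintype V₁] [Fintype V₂] [DecidableEq V₁]

variable (V₂) in
def coronaBlock (i : V₁) : Finset (V₁ ⊕ V₁ × V₂) := {v | coronaBase v = i}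

lemma mem_coronaBlock {i : V₁} {v : V₁ ⊕ V₁ × V₂} :
    v ∈ coronaBlock V₂ i ↔ coronaBase v = i := by
  simp [coronaBlock]

variable (V₂) in
lemma pairwise_disjoint_coronaBlock :
    Pairwise (Disjoint on coronaBlock (V₁ := V₁) V₂) := fun _ _ hij =>
  disjoint_left.mpr fun _ hi hj =>
    hij ((mem_coronaBlock.mp hi).symm.trans (mem_coronaBlock.mp hj))

lemma isClique_coronaBlock (G₁ : SimpleGraph V₁) (i : V₁) :
    (corona G₁ (⊤ : SimpleGraph V₂)).IsClique (coronaBlock V₂ i : Set _) := by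
  intro u hu v hv huv
  simp only [mem_coe, mem_coronaBlock] at hu hv
  subst hu
  rcases u with a | ⟨a, x⟩ <;> rcases v with b | ⟨b, y⟩ <;> simp [coronaBase] at hv ⊢
  · exact absurd (congrArg _ hv.symm) huv
  · exact hv.symm
  · exact hv
  · subst hv
    exact ⟨rfl, fun hxy => huv (congrArg _ (Prod.ext rfl hxy))⟩

lemma coronaBlock_eq_cons (i : V₁) :
    coronaBlock V₂ i = cons (.inl i)
      ((univ : Finset V₂).map ((Embedding.sectR i V₂).trans .inr)) (by simp) := by
  ext (a | ⟨a, x⟩) <;> simp [mem_coronaBlock, coronaBase, eq_comm]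

lemma card_coronaBlock (i : V₁) : #(coronaBlock V₂ i) = Fintype.card V₂ + 1 := by
  rw [coronaBlock_eq_cons, card_cons, card_map, card_univ]

end Corona

section CoronaSpare

variable {V₁ V₂ : Type*} {G₁ : SimpleGraph V₁}

/-- The vertices that get two-element labels in the extremal labeling; each block contains
exactly one of them. -/
def coronaSpare (c : V₁ → Bool) (j₀ : V₂) : Set (V₁ ⊕ V₁ × V₂) :=
  {v | v.elim (fun i => c i = true) (fun p => c p.1 = false ∧ p.2 = j₀)}

lemma coronaSpare_independent (c : G₁.Coloring Bool) (j₀ : V₂) ⦃u v : V₁ ⊕ V₁ × V₂⦄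
    (h : (corona G₁ (⊤ : SimpleGraph V₂)).Adj u v) :
    u ∉ coronaSpare c j₀ ∨ v ∉ coronaSpare c j₀ := by
  rw [← not_and_or]
  rintro ⟨hu, hv⟩
  rcases u with a | ⟨a, x⟩ <;> rcases v with b | ⟨b, y⟩ <;>
    simp only [coronaSpare, Set.mem_ofPred_eq, Sum.elim_inl, Sum.elim_inr] at hu hv
  · exact c.valid h (hu.trans hv.symm)
  · subst h; simp_all
  · subst h; simp_all
  · exact h.2 (hu.2.trans hv.2.symm)

lemma coronaBase_eq_of_adj_of_notMem_coronaSpare (c : G₁.Coloring Bool) (j₀ : V₂)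
    {u v : V₁ ⊕ V₁ × V₂} (h : (corona G₁ (⊤ : SimpleGraph V₂)).Adj u v)
    (hu : u ∉ coronaSpare c j₀) (hv : v ∉ coronaSpare c j₀) : coronaBase u = coronaBase v := by
  by_contra hne
  obtain ⟨a, b, rfl, rfl, hab⟩ := exists_adj_of_corona_adj h hne
  have := c.valid hab
  cases ha : c a <;> cases hb : c b <;> simp_all [coronaSpare]

lemma exists_mem_coronaBlock_mem_coronaSpare [Fintype V₁] [Fintype V₂] [DecidableEq V₁]
    (c : V₁ → Bool) (j₀ : V₂) (i : V₁) : ∃ v ∈ coronaBlock V₂ i, v ∈ coronaSpare c j₀ := by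
  cases hc : c i
  · exact ⟨.inr (i, j₀), mem_coronaBlock.mpr rfl, by simp [coronaSpare, hc]⟩
  · exact ⟨.inl i, mem_coronaBlock.mpr rfl, by simp [coronaSpare, hc]⟩

end CoronaSpare

section CoronaComplete

variable {V₁ V₂ : Type*} [Fintype V₁] [Fintype V₂] {G₁ : SimpleGraph V₁}

theorem IsWeakIASI.le_two_mul_monoCount_corona {f : V₁ ⊕ V₁ × V₂ → Finset ℕ}
    (hf : IsWeakIASI (corona G₁ (⊤ : SimpleGraph V₂)) f) :
    Fintype.card V₂ * (Fintype.card V₂ - 1) * Fintype.card V₁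
      ≤ 2 * monoCount (corona G₁ (⊤ : SimpleGraph V₂)) f := by
  classical
  rw [two_mul_monoCount hf.nonempty]
  calc Fintype.card V₂ * (Fintype.card V₂ - 1) * Fintype.card V₁
      = ∑ _i : V₁, Fintype.card V₂ * (Fintype.card V₂ - 1) := by simp [mul_comm]
    _ ≤ ∑ i, #{v ∈ coronaBlock V₂ i | #(f v) = 1}.offDiag := by
      refine sum_le_sum fun i _ => mul_pred_le_card_offDiag ?_
      have := hf.card_le_card_filter_add_one (isClique_coronaBlock G₁ i)
      rw [card_coronaBlock] at this
      omega
    _ ≤ _ :=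
      sum_card_offDiag_le_card_adj (pairwise_disjoint_coronaBlock V₂) (isClique_coronaBlock G₁)

theorem exists_isWeakIASI_two_mul_monoCount_corona_le (c : G₁.Coloring Bool) (j₀ : V₂) :
    ∃ f, IsWeakIASI (corona G₁ (⊤ : SimpleGraph V₂)) f ∧
      2 * monoCount (corona G₁ (⊤ : SimpleGraph V₂)) f
        ≤ Fintype.card V₂ * (Fintype.card V₂ - 1) * Fintype.card V₁ := by
  classical
  obtain ⟨f, hf, hmono⟩ := exists_isWeakIASI_card_eq_one_iff _ (coronaSpare_independent c j₀)
  refine ⟨f, hf, ?_⟩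
  have hcover ⦃u v⦄ (h : (corona G₁ ⊤).Adj u v) (hu : #(f u) = 1) (hv : #(f v) = 1) :
      ∃ i, u ∈ coronaBlock V₂ i ∧ v ∈ coronaBlock V₂ i :=
    ⟨coronaBase u, mem_coronaBlock.mpr rfl, mem_coronaBlock.mpr
      (coronaBase_eq_of_adj_of_notMem_coronaSpare c j₀ h ((hmono u).mp hu) ((hmono v).mp hv)).symm⟩
  rw [two_mul_monoCount hf.nonempty]
  calc _ ≤ ∑ i, #{v ∈ coronaBlock V₂ i | #(f v) = 1}.offDiag :=
        card_adj_le_sum_card_offDiag hcover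
    _ ≤ ∑ _i : V₁, Fintype.card V₂ * (Fintype.card V₂ - 1) := by
      refine sum_le_sum fun i _ => card_offDiag_le_mul_pred ?_
      obtain ⟨w, hw, hws⟩ := exists_mem_coronaBlock_mem_coronaSpare c j₀ i
      have := card_lt_card ((filter_ssubset (p := fun v => #(f v) = 1)).mpr
        ⟨w, hw, fun h => (hmono w).mp h hws⟩)
      rw [card_coronaBlock] at this
      omega
    _ = _ := by simp [mul_comm]

theorem two_mul_sparingNumber_corona_top [Nonempty V₂] (c : G₁.Coloring Bool) :
    2 * sparingNumber (corona G₁ (⊤ : SimpleGraph V₂))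
      = Fintype.card V₂ * (Fintype.card V₂ - 1) * Fintype.card V₁ := by
  obtain ⟨f, hf, hf_le⟩ :=
    exists_isWeakIASI_two_mul_monoCount_corona_le c (Classical.arbitrary V₂)
  obtain ⟨g, hg, hg_eq⟩ := exists_isWeakIASI_monoCount_eq_sparingNumber ⟨f, hf⟩
  have := hg.le_two_mul_monoCount_corona
  have := hf.sparingNumber_le
  omega

end CoronaComplete

theorem sparing_corona_path_complete_general (m n : ℕ) (hn : 1 ≤ n) :
    2 * sparingNumber (corona (SimpleGraph.pathGraph (m + 1)) (⊤ : SimpleGraph (Fin n)))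
      = n * (n - 1) * (m + 1) := by
  have : Nonempty (Fin n) := Fin.pos_iff_nonempty.mp hn
  simpa using
    two_mul_sparingNumber_corona_top (V₂ := Fin n) (SimpleGraph.pathGraph.bicoloring (m + 1))

/-- Sparing number of the corona `P_m ⊙ K_n` of a path and a complete graph. -/
theorem sparing_corona_path_complete (m n : ℕ) (hm : 1 ≤ m) (hn : 1 ≤ n) :
    2 * sparingNumber (corona (SimpleGraph.pathGraph (m + 1)) (⊤ : SimpleGraph (Fin n)))
      = n * (n - 1) * (m + 1) :=
  sparing_corona_path_complete_general m n hn
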